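/- arXiv:2510.01366 — 2 statements merged into one kernel-verified Lean document; each statement's English description precedes it below -/
import Mathlib

section
/- Let G be a graph, S a subset of its vertices, and K_n a complete graph on vertices {x_1,...,x_n} with n ≥ 2, disjoint from G. Let Γ be the graph with vertex set V(G) ⊔ V(K_n) and edge set E(G) ⊔ E(K_n) ⊔ {{u, x_n} : u ∈ S}. Then the minimum vertex cover number satisfies β(Γ) = β(G) + n − 1. -/
/-- `C` is a vertex cover of the simple graph `G`. -/
def IsVertexCover {α : Type*} (G : SimpleGraph α) (C : Finset α) : Prop :=
  ∀ ⦃u v : α⦄, G.Adj u v → u ∈ C ∨ v ∈ C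

/-- The minimum vertex cover number `β(G)`. -/
noncomputable def vcNum {α : Type*} (G : SimpleGraph α) : ℕ :=
  sInf {m : ℕ | ∃ C : Finset α, IsVertexCover G C ∧ C.card = m}

/-- The graph `Γ` obtained from `G` and a complete graph on `Fin n` by joining the
last vertex `x_n` of the complete graph to every vertex of `S`. -/
def attachCompleteGraph {α : Type*} (G : SimpleGraph α) (S : Set α) (n : ℕ) :
    SimpleGraph (α ⊕ Fin n) where
  Adj a b :=
    match a, b with
    | Sum.inl u, Sum.inl v => G.Adj u v
    | Sum.inr i, Sum.inr j => i ≠ j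
    | Sum.inl u, Sum.inr i => u ∈ S ∧ (i : ℕ) = n - 1
    | Sum.inr i, Sum.inl u => u ∈ S ∧ (i : ℕ) = n - 1
  symm := by
    refine ⟨?_⟩
    rintro (u | i) (v | j) h
    · exact h.symm
    · exact h
    · exact h
    · exact h.symm
  loopless := by
    refine ⟨?_⟩
    rintro (u | i) h
    · exact G.irrefl h
    · exact h rfl

/-!
A vertex cover of `Γ` restricts to a vertex cover of `G` and to a vertex cover of `K_n`, and
the latter misses at most one vertex of the clique; so `β(Γ) ≥ β(G) + n - 1`. Conversely, since
`n ≥ 2` the vertex `x_1` is not joined to `S`, so a minimum cover of `G` together with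
`x_2, …, x_n` covers `Γ`.
-/

open Finset

section

variable {α β : Type*}

lemma vcNum_le_card {G : SimpleGraph α} {C : Finset α} (hC : IsVertexCover G C) :
    vcNum G ≤ #C :=
  Nat.sInf_le ⟨C, hC, rfl⟩

lemma exists_isVertexCover_card_eq_vcNum [Fintype α] (G : SimpleGraph α) :
    ∃ C : Finset α, IsVertexCover G C ∧ #C = vcNum G :=
  Nat.sInf_mem (s := {m | ∃ C : Finset α, IsVertexCover G C ∧ #C = m})
    ⟨_, univ, fun u _ _ => .inl (mem_univ u), rfl⟩

lemma IsVertexCover.of_hom {G : SimpleGraph α} {H : SimpleGraph β} (f : G →g H)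
    {C : Finset β} {D : Finset α} (hCD : ∀ a, f a ∈ C → a ∈ D) (hC : IsVertexCover H C) :
    IsVertexCover G D :=
  fun _ _ huv => (hC (f.map_adj huv)).imp (hCD _) (hCD _)

lemma card_sub_one_le_of_isVertexCover_top [Fintype α] [DecidableEq α] {C : Finset α}
    (hC : IsVertexCover (⊤ : SimpleGraph α) C) : Fintype.card α - 1 ≤ #C := by
  have hcompl : #Cᶜ ≤ 1 := card_le_one.2 fun a ha b hb => by_contra fun hab =>
    (hC hab).elim (mem_compl.1 ha) (mem_compl.1 hb)
  have hsum := card_add_card_compl C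
  omega

namespace attachCompleteGraph

variable (G : SimpleGraph α) (S : Set α) (n : ℕ)

def inlHom : G →g attachCompleteGraph G S n := ⟨Sum.inl, id⟩

def inrHom : (⊤ : SimpleGraph (Fin n)) →g attachCompleteGraph G S n := ⟨Sum.inr, id⟩

variable {G S n}

lemma vcNum_add_le_card {D : Finset (α ⊕ Fin n)}
    (hD : IsVertexCover (attachCompleteGraph G S n) D) : vcNum G + (n - 1) ≤ #D := by
  rw [← card_toLeft_add_card_toRight]
  gcongr
  · exact vcNum_le_card (hD.of_hom (inlHom G S n) fun _ => mem_toLeft.2)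
  · simpa using card_sub_one_le_of_isVertexCover_top
      (hD.of_hom (inrHom G S n) fun _ => mem_toRight.2)

lemma isVertexCover_disjSum_erase_zero {C : Finset α} (hC : IsVertexCover G C) (hn : 2 ≤ n) :
    IsVertexCover (attachCompleteGraph G S n) (C.disjSum (univ.erase ⟨0, by omega⟩)) := by
  rintro (u | i) (v | j) h
  · simpa using hC h
  · right
    simp only [inr_mem_disjSum, mem_erase, mem_univ, and_true, ne_eq, Fin.ext_iff]
    have : (j : ℕ) = n - 1 := h.2
    omega
  · left
    simp only [inr_mem_disjSum, mem_erase, mem_univ, and_true, ne_eq, Fin.ext_iff]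
    have : (i : ℕ) = n - 1 := h.2
    omega
  · simp only [inr_mem_disjSum, mem_erase, mem_univ, and_true]
    by_contra! hij
    exact h (hij.1.trans hij.2.symm)

end attachCompleteGraph

end

theorem stmt0 {α : Type*} [Fintype α] (G : SimpleGraph α) (S : Set α) (n : ℕ)
    (hn : 2 ≤ n) :
    vcNum (attachCompleteGraph G S n) = vcNum G + n - 1 := by
  classical
  obtain ⟨C, hC, hCcard⟩ := exists_isVertexCover_card_eq_vcNum G
  obtain ⟨D, hD, hDcard⟩ := exists_isVertexCover_card_eq_vcNum (attachCompleteGraph G S n)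
  have hupper :=
    vcNum_le_card (attachCompleteGraph.isVertexCover_disjSum_erase_zero (S := S) hC hn)
  rw [card_disjSum, card_erase_of_mem (mem_univ _), card_univ, Fintype.card_fin, hCcard]
    at hupper
  have hlower := hDcard ▸ attachCompleteGraph.vcNum_add_le_card hD
  omega
end

section
/- Let {I_i}_{i≥0} be a filtration of monomial ideals in a polynomial ring and k ≥ 1 an integer. If ∂*(I_k) ⊆ I_{k−1}, then ∂*(sqf(I_k)) ⊆ sqf(I_{k−1}), where sqf denotes the ideal generated by the squarefree monomials of an ideal and ∂*(J) is the ideal generated by all m/x with m a minimal monomial generator of J and x a variable dividing m. -/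
open MvPolynomial

variable {n : ℕ} {K : Type*} [Field K]

/-- A (monic) monomial of the polynomial ring. -/
def IsMonomial (m : MvPolynomial (Fin n) K) : Prop :=
  ∃ s : Fin n →₀ ℕ, m = MvPolynomial.monomial s 1

/-- A squarefree (monic) monomial: a product of distinct variables. -/
def IsSqfMonomial (m : MvPolynomial (Fin n) K) : Prop :=
  ∃ A : Finset (Fin n), m = ∏ i ∈ A, X i

/-- `J` is a monomial ideal: it is generated by monomials. -/
def IsMonomialIdeal (J : Ideal (MvPolynomial (Fin n) K)) : Prop :=
  ∃ T : Set (MvPolynomial (Fin n) K), (∀ m ∈ T, IsMonomial m) ∧ J = Ideal.span T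

/-- `m` is a minimal (monic) monomial generator of the monomial ideal `J`:
a monomial of `J` not properly divisible by another monomial of `J`. -/
def IsMinGen (J : Ideal (MvPolynomial (Fin n) K)) (m : MvPolynomial (Fin n) K) : Prop :=
  IsMonomial m ∧ m ∈ J ∧
    ∀ m', IsMonomial m' → m' ∈ J → m' ∣ m → m' = m

/-- The ideal `∂*(J)`, generated by all `m / x` where `m` is a minimal monomial
generator of `J` and `x` a variable dividing `m`. -/
noncomputable def delStar (J : Ideal (MvPolynomial (Fin n) K)) : Ideal (MvPolynomial (Fin n) K) :=
  Ideal.span {q | ∃ m : MvPolynomial (Fin n) K, ∃ x : Fin n,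
    IsMinGen J m ∧ m = X x * q}

/-- The squarefree part `sqf(J)`: the ideal generated by all squarefree monomials in `J`. -/
noncomputable def sqfPart (J : Ideal (MvPolynomial (Fin n) K)) : Ideal (MvPolynomial (Fin n) K) :=
  Ideal.span {m | IsSqfMonomial m ∧ m ∈ J}

/-!
Let `m = x * q` be a minimal generator of `sqf(J)`. Minimality forces `m` itself to be a
squarefree monomial of `J`, hence `q` is squarefree, and some minimal generator `e ≠ 1` of `J`
divides `m`. Removing from `e` the variable `x` if `x ∣ e`, and any variable of `e` otherwise,
gives an element of `∂*(J)` dividing `q`. So `q ∈ ∂*(J)`, and `∂*(J) ⊆ J'` puts the squarefree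
monomial `q` into `sqf(J')`.
-/

theorem Finsupp.exists_sub_single_le_sub_single {σ : Type*} {e s : σ →₀ ℕ} (he : e ≠ 0)
    (hes : e ≤ s) (x : σ) : ∃ y, e y ≠ 0 ∧ e - single y 1 ≤ s - single x 1 := by
  classical
  by_cases hex : e x = 0
  · obtain ⟨y, hy⟩ := Finsupp.ne_iff.mp he
    refine ⟨y, hy, fun i => ?_⟩
    have := hes i
    by_cases hix : i = x
    · subst hix; simp [hex]
    · simp only [tsub_apply, single_apply, if_neg (Ne.symm hix)]
      omega
  · exact ⟨x, hex, tsub_le_tsub_right hes _⟩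

theorem isSqfMonomial_iff {m : MvPolynomial (Fin n) K} :
    IsSqfMonomial m ↔ ∃ s : Fin n →₀ ℕ, (∀ i, s i ≤ 1) ∧ m = monomial s 1 := by
  classical
  have prod_X_eq (A : Finset (Fin n)) :
      ∏ i ∈ A, (X i : MvPolynomial (Fin n) K) = monomial (∑ i ∈ A, Finsupp.single i 1) 1 :=
    (monomial_sum_one A _).symm
  constructor
  · rintro ⟨A, rfl⟩
    refine ⟨_, fun i => ?_, prod_X_eq A⟩
    simp only [Finsupp.coe_finsetSum, Finset.sum_apply, Finsupp.single_apply,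
      Finset.sum_ite_eq']
    split_ifs <;> omega
  · rintro ⟨s, hs, rfl⟩
    refine ⟨s.support, ?_⟩
    rw [prod_X_eq]
    congr
    ext j
    have := hs j
    simp only [Finsupp.coe_finsetSum, Finset.sum_apply, Finsupp.single_apply,
      Finset.sum_ite_eq', Finsupp.mem_support_iff]
    split_ifs <;> omega

theorem IsSqfMonomial.isMonomial {m : MvPolynomial (Fin n) K} (hm : IsSqfMonomial m) :
    IsMonomial m := by
  obtain ⟨s, -, rfl⟩ := isSqfMonomial_iff.mp hm
  exact ⟨s, rfl⟩

theorem exists_mem_dvd_of_monomial_mem_span {T : Set (MvPolynomial (Fin n) K)}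
    (hT : ∀ p ∈ T, IsMonomial p) {s : Fin n →₀ ℕ} (hs : monomial s (1 : K) ∈ Ideal.span T) :
    ∃ t ∈ T, t ∣ monomial s 1 := by
  have hT_eq : T = (fun e => monomial e (1 : K)) '' {e | monomial e (1 : K) ∈ T} := by
    ext t
    refine ⟨fun ht => ?_, fun ⟨e, he, het⟩ => het ▸ he⟩
    obtain ⟨e, rfl⟩ := hT t ht
    exact ⟨e, ht, rfl⟩
  rw [hT_eq, mem_ideal_span_monomial_image] at hs
  obtain ⟨e, he, hle⟩ := hs s (by simp)
  exact ⟨monomial e 1, he, monomial_dvd_monomial.mpr ⟨Or.inr hle, dvd_rfl⟩⟩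

theorem IsMinGen.mem_of_eq_span {J : Ideal (MvPolynomial (Fin n) K)}
    {T : Set (MvPolynomial (Fin n) K)} (hT : ∀ p ∈ T, IsMonomial p) (hJ : J = Ideal.span T)
    {m : MvPolynomial (Fin n) K} (hm : IsMinGen J m) : m ∈ T := by
  obtain ⟨⟨s, rfl⟩, hmJ, hmin⟩ := hm
  obtain ⟨t, ht, htm⟩ := exists_mem_dvd_of_monomial_mem_span hT (hJ ▸ hmJ)
  rwa [← hmin t (hT t ht) (hJ ▸ Ideal.subset_span ht) htm]

theorem exists_isMinGen_le {J : Ideal (MvPolynomial (Fin n) K)} {s : Fin n →₀ ℕ}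
    (hs : monomial s (1 : K) ∈ J) :
    ∃ e : Fin n →₀ ℕ, IsMinGen J (monomial e 1) ∧ e ≤ s := by
  obtain ⟨e, ⟨heJ, hes⟩, hmin⟩ :=
    wellFounded_lt.has_min {e | monomial e (1 : K) ∈ J ∧ e ≤ s} ⟨s, hs, le_rfl⟩
  refine ⟨e, ⟨⟨e, rfl⟩, heJ, ?_⟩, hes⟩
  rintro _ ⟨e', rfl⟩ he'J hdvd
  have hle : e' ≤ e := (monomial_dvd_monomial.mp hdvd).1.resolve_left one_ne_zero
  rw [(hle.lt_or_eq.resolve_left fun hlt => hmin e' ⟨he'J, hle.trans hes⟩ hlt)]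

theorem monomial_sub_single_mem_delStar {J : Ideal (MvPolynomial (Fin n) K)}
    {e : Fin n →₀ ℕ} (he : IsMinGen J (monomial e 1)) {y : Fin n} (hy : e y ≠ 0) :
    monomial (e - Finsupp.single y 1) (1 : K) ∈ delStar J := by
  refine Ideal.subset_span ⟨_, y, he, ?_⟩
  have hye : Finsupp.single y 1 ≤ e := by
    rw [Finsupp.single_le_iff]
    omega
  rw [X, monomial_mul, one_mul, add_tsub_cancel_of_le hye]

theorem eq_monomial_sub_single_of_X_mul_eq {x : Fin n} {q : MvPolynomial (Fin n) K}
    {s : Fin n →₀ ℕ} (h : X x * q = monomial s 1) :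
    Finsupp.single x 1 ≤ s ∧ q = monomial (s - Finsupp.single x 1) 1 := by
  have hxs : Finsupp.single x 1 ≤ s := by
    rw [Finsupp.single_le_iff, Nat.one_le_iff_ne_zero]
    exact (X_dvd_monomial.mp (h ▸ dvd_mul_right _ _)).resolve_left one_ne_zero
  refine ⟨hxs, mul_left_cancel₀ (X_ne_zero x) ?_⟩
  rw [h, X, monomial_mul, one_mul, add_tsub_cancel_of_le hxs]

theorem one_mem_sqfPart {J : Ideal (MvPolynomial (Fin n) K)}
    (hJ : (1 : MvPolynomial (Fin n) K) ∈ J) :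
    (1 : MvPolynomial (Fin n) K) ∈ sqfPart J :=
  Ideal.subset_span ⟨⟨∅, Finset.prod_empty.symm⟩, hJ⟩

theorem IsMinGen.isSqfMonomial_and_mem {J : Ideal (MvPolynomial (Fin n) K)}
    {m : MvPolynomial (Fin n) K} (hm : IsMinGen (sqfPart J) m) : IsSqfMonomial m ∧ m ∈ J :=
  hm.mem_of_eq_span (fun _ hp => hp.1.isMonomial) rfl

theorem isSqfMonomial_and_mem_delStar_of_isMinGen_sqfPart {J : Ideal (MvPolynomial (Fin n) K)}
    {x : Fin n} {q : MvPolynomial (Fin n) K} (hm : IsMinGen (sqfPart J) (X x * q)) :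
    IsSqfMonomial q ∧ q ∈ delStar J := by
  obtain ⟨hsqf, hmJ⟩ := hm.isSqfMonomial_and_mem
  obtain ⟨s, hs1, hs⟩ := isSqfMonomial_iff.mp hsqf
  obtain ⟨hxs, rfl⟩ := eq_monomial_sub_single_of_X_mul_eq hs
  refine ⟨isSqfMonomial_iff.mpr ⟨_, fun i => (tsub_le_self (a := s i)).trans (hs1 i), rfl⟩, ?_⟩
  obtain ⟨e, he, hes⟩ := exists_isMinGen_le (hs ▸ hmJ)
  -- `e = 0` would put `1` into `sqf(J)`, and minimality of `m` would force `m = 1`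
  have he0 : e ≠ 0 := by
    rintro rfl
    have h1 := hm.2.2 1 ⟨0, rfl⟩ (one_mem_sqfPart he.2.1) (one_dvd _)
    rw [hs, one_def, monomial_eq_monomial_iff] at h1
    obtain ⟨hs0, -⟩ | ⟨h, -⟩ := h1
    · simp [← hs0] at hxs
    · exact one_ne_zero h
  obtain ⟨y, hy, hle⟩ := Finsupp.exists_sub_single_le_sub_single he0 hes x
  obtain ⟨c, hc⟩ := monomial_dvd_monomial.mpr ⟨Or.inr hle, dvd_refl (1 : K)⟩
  rw [hc]
  exact Ideal.mul_mem_right _ _ (monomial_sub_single_mem_delStar he hy)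

theorem delStar_sqfPart_le_sqfPart {J J' : Ideal (MvPolynomial (Fin n) K)}
    (h : delStar J ≤ J') : delStar (sqfPart J) ≤ sqfPart J' := by
  rw [delStar, Ideal.span_le]
  rintro q ⟨m, x, hm, rfl⟩
  obtain ⟨hsqf, hq⟩ := isSqfMonomial_and_mem_delStar_of_isMinGen_sqfPart hm
  exact Ideal.subset_span ⟨hsqf, h hq⟩

theorem stmt6_general (I : ℕ → Ideal (MvPolynomial (Fin n) K))
    (k : ℕ)
    (h : delStar (I k) ≤ I (k - 1)) :
    delStar (sqfPart (I k)) ≤ sqfPart (I (k - 1)) :=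
  delStar_sqfPart_le_sqfPart h

theorem stmt6 (I : ℕ → Ideal (MvPolynomial (Fin n) K))
    -- `{I_i}` is a filtration of monomial ideals
    (h0 : I 0 = ⊤) (h1ne : I 1 ≠ ⊥) (h1pr : I 1 ≠ ⊤)
    (hdesc : ∀ i : ℕ, I (i + 1) ≤ I i)
    (hmon : ∀ i : ℕ, IsMonomialIdeal (I i))
    (k : ℕ) (hk : 1 ≤ k)
    (h : delStar (I k) ≤ I (k - 1)) :
    delStar (sqfPart (I k)) ≤ sqfPart (I (k - 1)) :=
  stmt6_general I k h
end
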